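/- The number of critical cubes of Ω_n of dimension n−2 equals 2^n + C(n−1,2) − 2, where C(n−1,2) is a binomial coefficient. -/

import Mathlib

/-- A (potential) cube of the cubical complex `Ω_n`: an ordered 4-tuple of finite
subsets of `ℕ`. -/
structure Cube where
  A : Finset ℕ
  B : Finset ℕ
  C : Finset ℕ
  D : Finset ℕ
deriving DecidableEq

/-- `σ` is a cube of `Ω_n`: the four parts are pairwise disjoint, their union is
`[n] = {1,…,n}`, and `A`, `C` are nonempty. -/
def IsCube (n : ℕ) (σ : Cube) : Prop :=
  Disjoint σ.A σ.B ∧ Disjoint σ.A σ.C ∧ Disjoint σ.A σ.D ∧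
  Disjoint σ.B σ.C ∧ Disjoint σ.B σ.D ∧ Disjoint σ.C σ.D ∧
  σ.A ∪ σ.B ∪ σ.C ∪ σ.D = Finset.Icc 1 n ∧
  σ.A.Nonempty ∧ σ.C.Nonempty

/-- The dimension of a cube, `|B| + |D|`. -/
def Cube.dim (σ : Cube) : ℕ := σ.B.card + σ.D.card

/-- The pivot `α(σ) = min (A ∪ B)`. -/
noncomputable def Cube.alpha (σ : Cube) : ℕ := sInf (↑(σ.A ∪ σ.B) : Set ℕ)

/-- The pivot `β(σ) = max (B ∪ C)`. -/
noncomputable def Cube.beta (σ : Cube) : ℕ := sSup (↑(σ.B ∪ σ.C) : Set ℕ)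

def M1up (σ : Cube) : Prop := σ.alpha ∈ σ.B
def M1down (σ : Cube) : Prop := σ.alpha ∈ σ.A ∧ 2 ≤ σ.A.card
def M2up (σ : Cube) : Prop := σ.A = {σ.alpha} ∧ σ.beta ∈ σ.B
def M2down (σ : Cube) : Prop :=
  σ.A = {σ.alpha} ∧ σ.beta ∈ σ.C ∧ 2 ≤ σ.C.card ∧ σ.alpha < σ.beta
def Mdown (σ : Cube) : Prop := M1down σ ∨ M2down σ
def Mup (σ : Cube) : Prop := M1up σ ∨ M2up σ
def Critical (σ : Cube) : Prop := ¬ Mdown σ ∧ ¬ Mup σ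

/-- The covering relation: `τ` is obtained from `σ` by moving exactly one element
of `B(σ) ∪ D(σ)` into `A(σ)` or into `C(σ)`. -/
def Covers (σ τ : Cube) : Prop :=
  (∃ x ∈ σ.B, τ = ⟨insert x σ.A, σ.B.erase x, σ.C, σ.D⟩) ∨
  (∃ x ∈ σ.B, τ = ⟨σ.A, σ.B.erase x, insert x σ.C, σ.D⟩) ∨
  (∃ x ∈ σ.D, τ = ⟨insert x σ.A, σ.B, σ.C, σ.D.erase x⟩) ∨
  (∃ x ∈ σ.D, τ = ⟨σ.A, σ.B, insert x σ.C, σ.D.erase x⟩)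

open Classical in
/-- The matching `μ₊ : M↓ → M↑`. -/
noncomputable def muPlus (σ : Cube) : Cube :=
  if M1down σ then ⟨σ.A.erase σ.alpha, insert σ.alpha σ.B, σ.C, σ.D⟩
  else ⟨σ.A, insert σ.beta σ.B, σ.C.erase σ.beta, σ.D⟩

/-!
A cube of dimension `n - 2` has `|A| = |C| = 1`, say `A = {a}` and `C = {c}`, and it is critical
exactly when `B ⊆ (a, c)`: then `α = a` and `β = c`, so neither `α` nor `β` lies in `B`, while
`M₁↓` and `M₂↓` need `|A| ≥ 2` or `|C| ≥ 2`. Hence these cubes are the triples `(a, c, B)` with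
`a ≠ c` in `[n]` and `B ⊆ (a, c)`, numbering `∑_{a ≠ c} 2^|(a, c)|`. Passing from `n` to `n + 1`
adds the `n` pairs `(n + 1, c)`, with empty interval, and the pairs `(a, n + 1)`, contributing
`∑ 2^(n - a) = 2^n - 1`; so the sum is `2^n + C(n, 2) - n - 1 = 2^n + C(n - 1, 2) - 2`.
-/

open Finset

lemma add_one_choose_two (n : ℕ) : (n + 1).choose 2 = n + n.choose 2 := by
  simp [Nat.choose_succ_succ' n 1]

lemma sum_Icc_two_pow_card_Ioo_add_one (n : ℕ) :
    ∑ a ∈ Icc 1 n, 2 ^ #(Ioo a (n + 1)) + 1 = 2 ^ n := by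
  have hreflect : ∑ a ∈ Icc 1 n, 2 ^ #(Ioo a (n + 1)) = ∑ k ∈ range n, 2 ^ k := by
    have := sum_Ico_reflect (2 ^ ·) 1 (m := n + 1) (n := n) le_rfl
    simp only [Ico_add_one_right_eq_Icc, Nat.sub_self, add_tsub_cancel_right,
      Nat.Ico_zero_eq_range] at this
    rw [← this]
    exact sum_congr rfl fun a _ => by rw [Nat.card_Ioo, Nat.sub_right_comm, Nat.add_sub_cancel]
  rw [hreflect, Nat.geomSum_eq le_rfl]
  have := Nat.one_le_two_pow (n := n)
  omega

lemma sum_offDiag_Icc_two_pow_card_Ioo (n : ℕ) :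
    ∑ p ∈ (Icc 1 n).offDiag, 2 ^ #(Ioo p.1 p.2) + n + 1 = 2 ^ n + n.choose 2 := by
  induction n with
  | zero => simp
  | succ n ih =>
    have hnew : n + 1 ∉ Icc 1 n := by simp
    rw [← insert_Icc_right_eq_Icc_add_one (by omega), offDiag_insert hnew, sum_union, sum_union,
      sum_product, sum_product]
    · simp only [sum_singleton]
      have hfrom_new : ∑ c ∈ Icc 1 n, 2 ^ #(Ioo (n + 1) c) = n := by
        have hone : ∀ c ∈ Icc 1 n, 2 ^ #(Ioo (n + 1) c) = 1 := fun c hc => by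
          rw [Ioo_eq_empty_of_le (by grind), card_empty, pow_zero]
        rw [sum_congr rfl hone]
        simp
      have hto_new := sum_Icc_two_pow_card_Ioo_add_one n
      rw [add_one_choose_two, pow_succ]
      omega
    all_goals
      simp only [disjoint_left, mem_union, mem_offDiag, mem_product, mem_singleton]
      grind

namespace Cube

lemma alpha_mem {σ : Cube} (h : (σ.A ∪ σ.B).Nonempty) : σ.alpha ∈ σ.A ∪ σ.B :=
  Nat.sInf_mem (by simpa using h)

lemma alpha_le {σ : Cube} {x : ℕ} (hx : x ∈ σ.A ∪ σ.B) : σ.alpha ≤ x :=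
  Nat.sInf_le (by simpa using hx)

lemma beta_mem {σ : Cube} (h : (σ.B ∪ σ.C).Nonempty) : σ.beta ∈ σ.B ∪ σ.C :=
  Nat.sSup_mem (by simpa using h) (Finset.bddAbove _)

lemma le_beta {σ : Cube} {x : ℕ} (hx : x ∈ σ.B ∪ σ.C) : x ≤ σ.beta :=
  le_csSup (Finset.bddAbove _) (by simpa using hx)

end Cube

lemma critical_iff_subset_Ioo {σ : Cube} {a c : ℕ} (hAB : Disjoint σ.A σ.B)
    (hBC : Disjoint σ.B σ.C) (hA : σ.A = {a}) (hC : σ.C = {c}) :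
    Critical σ ↔ σ.B ⊆ Ioo a c := by
  have hα : σ.alpha ∈ insert a σ.B := by simpa [hA] using Cube.alpha_mem (σ := σ) (by simp [hA])
  have hβ : σ.beta ∈ insert c σ.B := by
    simpa [hC, or_comm] using Cube.beta_mem (σ := σ) (by simp [hC])
  have hαa : σ.alpha ≤ a := Cube.alpha_le (by simp [hA])
  have hcβ : c ≤ σ.beta := Cube.le_beta (by simp [hC])
  have haB : a ∉ σ.B := disjoint_left.1 hAB (by simp [hA])
  have hcB : c ∉ σ.B := disjoint_right.1 hBC (by simp [hC])
  simp only [Critical, Mdown, Mup, M1down, M2down, M1up, M2up, hA, hC, card_singleton]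
  constructor
  · rintro ⟨-, hup⟩ b hb
    push Not at hup
    have hα_eq : σ.alpha = a := (mem_insert.1 hα).resolve_right hup.1
    have hβ_eq : σ.beta = c := (mem_insert.1 hβ).resolve_right (hup.2 (by rw [hα_eq]))
    have hba : b ≠ a := fun h => haB (h ▸ hb)
    have hbc : b ≠ c := fun h => hcB (h ▸ hb)
    have := Cube.alpha_le (mem_union_right _ hb)
    have := Cube.le_beta (mem_union_left _ hb)
    rw [mem_Ioo]
    omega
  · intro hB
    have hα_eq : σ.alpha = a :=
      (mem_insert.1 hα).resolve_right fun h => (mem_Ioo.1 (hB h)).1.not_ge hαa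
    have hβ_eq : σ.beta = c :=
      (mem_insert.1 hβ).resolve_right fun h => (mem_Ioo.1 (hB h)).2.not_ge hcβ
    simp [hα_eq, hβ_eq, haB, hcB]

def topCube (n a c : ℕ) (B : Finset ℕ) : Cube :=
  ⟨{a}, B, {c}, Icc 1 n \ ({a} ∪ B ∪ {c})⟩

lemma isCube_topCube {n a c : ℕ} {B : Finset ℕ} (ha : a ∈ Icc 1 n) (hc : c ∈ Icc 1 n)
    (hac : a ≠ c) (hB : B ⊆ Icc 1 n) (haB : a ∉ B) (hcB : c ∉ B) :
    IsCube n (topCube n a c B) := by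
  have hsub : {a} ∪ B ∪ {c} ⊆ Icc 1 n := by simp [insert_subset_iff, *]
  refine ⟨?_, ?_, ?_, ?_, ?_, ?_, union_sdiff_of_subset hsub, by simp [topCube],
    by simp [topCube]⟩
  all_goals simp only [topCube, disjoint_left]; grind

lemma topCube_inj {n a c a' c' : ℕ} {B B' : Finset ℕ} :
    topCube n a c B = topCube n a' c' B' ↔ a = a' ∧ c = c' ∧ B = B' := by
  refine ⟨fun h => ?_, by rintro ⟨rfl, rfl, rfl⟩; rfl⟩
  simp only [topCube, Cube.mk.injEq, singleton_inj] at h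
  exact ⟨h.1, h.2.2.1, h.2.1⟩

namespace IsCube

variable {n : ℕ} {σ : Cube}

lemma card_parts (h : IsCube n σ) : #σ.A + #σ.B + #σ.C + #σ.D = n := by
  obtain ⟨hAB, hAC, hAD, hBC, hBD, hCD, hunion, -, -⟩ := h
  have := congrArg card hunion
  rwa [card_union_of_disjoint (by simp [*]), card_union_of_disjoint (by simp [*]),
    card_union_of_disjoint hAB, Nat.card_Icc, Nat.add_sub_cancel] at this

lemma dim_eq_sub_two_iff (h : IsCube n σ) : σ.dim = n - 2 ↔ #σ.A = 1 ∧ #σ.C = 1 := by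
  have := h.card_parts
  have := h.2.2.2.2.2.2.2.1.card_pos
  have := h.2.2.2.2.2.2.2.2.card_pos
  unfold Cube.dim
  omega

lemma eq_topCube {a c : ℕ} (h : IsCube n σ) (hA : σ.A = {a}) (hC : σ.C = {c}) :
    σ = topCube n a c σ.B := by
  obtain ⟨-, -, hAD, -, hBD, hCD, hunion, -, -⟩ := h
  obtain ⟨A, B, C, D⟩ := σ
  subst hA hC
  simp only [topCube, ← hunion, Cube.mk.injEq, true_and]
  exact (union_sdiff_cancel_left (by simp_all)).symm

end IsCube

lemma setOf_critical_dim_eq_sub_two_eq_image_topCube (n : ℕ) :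
    {σ : Cube | IsCube n σ ∧ Critical σ ∧ σ.dim = n - 2} =
      ((Icc 1 n).offDiag.sigma fun p => (Ioo p.1 p.2).powerset).image
        fun x => topCube n x.1.1 x.1.2 x.2 := by
  ext σ
  simp only [Set.mem_ofPred_eq, coe_image, Set.mem_image, mem_coe, mem_sigma, mem_offDiag,
    mem_powerset]
  constructor
  · rintro ⟨hσ, hcrit, hdim⟩
    obtain ⟨hA, hC⟩ := hσ.dim_eq_sub_two_iff.1 hdim
    obtain ⟨a, hA⟩ := card_eq_one.1 hA
    obtain ⟨c, hC⟩ := card_eq_one.1 hC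
    have hunion := hσ.2.2.2.2.2.2.1
    refine ⟨⟨(a, c), σ.B⟩, ⟨⟨?_, ?_, ?_⟩, ?_⟩, (hσ.eq_topCube hA hC).symm⟩
    · simp [← hunion, hA]
    · simp [← hunion, hC]
    · rintro (rfl : a = c)
      exact disjoint_left.1 hσ.2.1 (show a ∈ σ.A by simp [hA]) (by simp [hC])
    · exact (critical_iff_subset_Ioo hσ.1 hσ.2.2.2.1 hA hC).1 hcrit
  · rintro ⟨⟨⟨a, c⟩, B⟩, ⟨⟨ha, hc, hac⟩, hB⟩, rfl⟩
    have hcube : IsCube n (topCube n a c B) := by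
      refine isCube_topCube ha hc hac ?_ ?_ ?_ <;> intro h <;> grind
    exact ⟨hcube, (critical_iff_subset_Ioo hcube.1 hcube.2.2.2.1 rfl rfl).2 hB,
      hcube.dim_eq_sub_two_iff.2 (by simp [topCube])⟩

theorem count_critical_top_general (n : ℕ) :
    {σ : Cube | IsCube n σ ∧ Critical σ ∧ σ.dim = n - 2}.ncard =
      2 ^ n + (n - 1).choose 2 - 2 := by
  rw [setOf_critical_dim_eq_sub_two_eq_image_topCube, Set.ncard_coe_finset,
    card_image_of_injective _ fun x y h => ?_, card_sigma]
  · simp only [card_powerset]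
    have hsum := sum_offDiag_Icc_two_pow_card_Ioo n
    obtain _ | m := n
    · simp
    · have : 2 ≤ 2 ^ (m + 1) := Nat.le_self_pow (Nat.succ_ne_zero m) 2
      rw [add_one_choose_two, Nat.add_sub_cancel] at *
      omega
  · obtain ⟨⟨a, c⟩, B⟩ := x
    obtain ⟨⟨a', c'⟩, B'⟩ := y
    obtain ⟨rfl, rfl, rfl⟩ := topCube_inj.1 h
    rfl

/-- The number of critical cubes of `Ω_n` of dimension `n−2` equals
`2^n + C(n−1,2) − 2`. -/
theorem count_critical_top (n : ℕ) (hn : 2 ≤ n) :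
    {σ : Cube | IsCube n σ ∧ Critical σ ∧ σ.dim = n - 2}.ncard =
      2 ^ n + (n - 1).choose 2 - 2 :=
  count_critical_top_general n
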